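/- arXiv:2511.18176 — 5 statements merged into one kernel-verified Lean document; each statement's English description precedes it below -/
import Mathlib

section
/- Let S₁, S₂ ⊆ ℝⁿ be closed convex cones. Then the negative polar cone of their intersection equals the closure of the sum of their negative polar cones: (S₁ ∩ S₂)° = cl(S₁° + S₂°). -/
open Pointwise

/-- Negative polar cone. -/
def negPolar {n : ℕ} (S : Set (EuclideanSpace ℝ (Fin n))) : Set (EuclideanSpace ℝ (Fin n)) :=
  {u | ∀ x ∈ S, (inner ℝ u x : ℝ) ≤ 0}

/-!
Up to sign, `negPolar` is the inner dual cone `K*`. Duality turns the closed sum `K ⊔ L` of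
closed convex cones into `K* ∩ L*`, and a closed convex cone is its own bidual (Farkas), so
`(K₁ ∩ K₂)* = (K₁** ∩ K₂**)* = (K₁* ⊔ K₂*)** = K₁* ⊔ K₂* = cl (K₁* + K₂*)`.
-/

open Set

theorem Convex.exists_properCone_coe_eq {E : Type*} [AddCommGroup E] [Module ℝ E]
    [TopologicalSpace E] [ContinuousSMul ℝ E] {S : Set E} (hne : S.Nonempty) (hc : IsClosed S)
    (hconv : Convex ℝ S) (hcone : ∀ t : ℝ, 0 < t → ∀ x ∈ S, t • x ∈ S) :
    ∃ K : ProperCone ℝ E, (K : Set E) = S := by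
  have hC : (ConvexCone.hull ℝ S : Set E) = S := by
    refine Subset.antisymm (fun x hx ↦ ?_) ConvexCone.subset_hull
    obtain ⟨r, hr, y, hy, rfl⟩ := (ConvexCone.mem_hull_of_convex hconv).1 hx
    exact hcone r hr y hy
  obtain ⟨K, hK⟩ :=
    CanLift.prf (β := ProperCone ℝ E) (ConvexCone.hull ℝ S) (by rw [hC]; exact ⟨hne, hc⟩)
  exact ⟨K, hC ▸ congrArg SetLike.coe hK⟩

namespace ProperCone

theorem coe_sup {E : Type*} [AddCommGroup E] [TopologicalSpace E] [Module ℝ E] [ContinuousAdd E]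
    [ContinuousSMul ℝ E] (C D : ProperCone ℝ E) :
    ((C ⊔ D : ProperCone ℝ E) : Set E) = closure ((C : Set E) + (D : Set E)) := by
  rw [ClosedSubmodule.coe_sup, Submodule.carrier_eq_coe, Submodule.coe_sup]; rfl

variable {E : Type*} [NormedAddCommGroup E] [InnerProductSpace ℝ E] [CompleteSpace E]

theorem mem_innerDual_iff_le_comap {C : ProperCone ℝ E} {y : E} :
    y ∈ innerDual (C : Set E) ↔ C ≤ (positive ℝ ℝ).comap (innerSL ℝ y) := by
  simp [SetLike.le_def, real_inner_comm]

theorem innerDual_sup (C D : ProperCone ℝ E) :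
    innerDual ((C ⊔ D : ProperCone ℝ E) : Set E) = innerDual C ⊓ innerDual D := by
  ext y
  simp only [mem_innerDual_iff_le_comap, sup_le_iff, ClosedSubmodule.mem_inf]

theorem innerDual_inter (C D : ProperCone ℝ E) :
    innerDual ((C : Set E) ∩ D) = innerDual C ⊔ innerDual D := by
  calc innerDual ((C : Set E) ∩ D)
      = innerDual (innerDual ((innerDual C ⊔ innerDual D : ProperCone ℝ E) : Set E)) := by
        rw [innerDual_sup, innerDual_innerDual, innerDual_innerDual]; rfl
    _ = innerDual C ⊔ innerDual D := innerDual_innerDual _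

end ProperCone

theorem negPolar_eq_neg_innerDual {n : ℕ} (S : Set (EuclideanSpace ℝ (Fin n))) :
    negPolar S = -(ProperCone.innerDual S : Set (EuclideanSpace ℝ (Fin n))) := by
  ext u
  simp [negPolar, inner_neg_right, real_inner_comm]

theorem negPolar_empty {n : ℕ} : negPolar (∅ : Set (EuclideanSpace ℝ (Fin n))) = univ := by
  simp [negPolar]

theorem zero_mem_negPolar {n : ℕ} (S : Set (EuclideanSpace ℝ (Fin n))) : 0 ∈ negPolar S := by
  simp [negPolar]

theorem stmt_1 {n : ℕ} (S₁ S₂ : Set (EuclideanSpace ℝ (Fin n)))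
    (hS₁c : IsClosed S₁) (hS₂c : IsClosed S₂)
    (hS₁conv : Convex ℝ S₁) (hS₂conv : Convex ℝ S₂)
    (hS₁cone : ∀ t : ℝ, 0 ≤ t → ∀ x ∈ S₁, t • x ∈ S₁)
    (hS₂cone : ∀ t : ℝ, 0 ≤ t → ∀ x ∈ S₂, t • x ∈ S₂) :
    negPolar (S₁ ∩ S₂) = closure (negPolar S₁ + negPolar S₂) := by
  rcases S₁.eq_empty_or_nonempty with rfl | hS₁
  · simp [negPolar_empty, univ_add_of_zero_mem (zero_mem_negPolar S₂)]
  rcases S₂.eq_empty_or_nonempty with rfl | hS₂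
  · simp [negPolar_empty, add_univ_of_zero_mem (zero_mem_negPolar S₁)]
  obtain ⟨K₁, rfl⟩ := hS₁conv.exists_properCone_coe_eq hS₁ hS₁c fun t ht ↦ hS₁cone t ht.le
  obtain ⟨K₂, rfl⟩ := hS₂conv.exists_properCone_coe_eq hS₂ hS₂c fun t ht ↦ hS₂cone t ht.le
  simp only [negPolar_eq_neg_innerDual, ProperCone.innerDual_inter, ProperCone.coe_sup,
    neg_closure, neg_add]
end

section
/- If a closed set S ⊆ ℝⁿ is locally star-shaped at every one of its points, then S is convex. -/
/-! On a segment `[x, y]` of `S`, the parameters `t ∈ [0, 1]` with `lineMap x y t ∈ S` form a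
closed set containing `0`. Local star-shapedness at the point with parameter `t < 1`, looking
towards `y ∈ S`, puts a right neighbourhood of `t` into that set, and a closed subset of `[0, 1]`
containing `0` with this property is all of `[0, 1]`. -/

open Set Filter Topology AffineMap

section LocallyStarShaped

variable {E : Type*} [AddCommGroup E] [Module ℝ E]

def IsLocallyStarShapedAt (S : Set E) (x₀ : E) : Prop :=
  ∀ x ∈ S, ∃ a ∈ Ioc (0 : ℝ) 1, ∀ l ∈ Ioo (0 : ℝ) a, x₀ + l • (x - x₀) ∈ S

theorem lineMap_add_smul_sub_lineMap (x y : E) (t l : ℝ) :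
    lineMap x y t + l • (y - lineMap x y t) = lineMap x y (t + l * (1 - t)) := by
  simp only [lineMap_apply_module']
  module

theorem IsLocallyStarShapedAt.lineMap_preimage_mem_nhdsGT {S : Set E} {x y : E} {t : ℝ}
    (h : IsLocallyStarShapedAt S (lineMap x y t)) (hy : y ∈ S) (ht : t < 1) :
    lineMap x y ⁻¹' S ∈ 𝓝[>] t := by
  obtain ⟨a, ⟨ha, -⟩, hmem⟩ := h y hy
  have h1t : 0 < 1 - t := sub_pos.2 ht
  refine mem_of_superset (Ioo_mem_nhdsGT (by nlinarith : t < t + a * (1 - t))) ?_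
  rintro u ⟨htu, hua⟩
  have hl : (u - t) / (1 - t) ∈ Ioo 0 a :=
    ⟨div_pos (sub_pos.2 htu) h1t, (div_lt_iff₀ h1t).2 (by linarith)⟩
  have hu : u = t + (u - t) / (1 - t) * (1 - t) := by field_simp; ring
  rw [mem_preimage, hu, ← lineMap_add_smul_sub_lineMap]
  exact hmem _ hl

theorem IsClosed.convex_of_forall_isLocallyStarShapedAt [TopologicalSpace E]
    [IsTopologicalAddGroup E] [ContinuousSMul ℝ E] {S : Set E} (hS : IsClosed S)
    (hstar : ∀ x₀ ∈ S, IsLocallyStarShapedAt S x₀) : Convex ℝ S := by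
  refine convex_iff_segment_subset.2 fun x hx y hy => ?_
  rw [segment_eq_image_lineMap, image_subset_iff]
  exact ((hS.preimage lineMap_continuous).inter isClosed_Icc).Icc_subset_of_forall_mem_nhdsWithin
    (by simpa using hx) fun t ht => (hstar _ ht.1).lineMap_preimage_mem_nhdsGT hy ht.2.2

end LocallyStarShaped

theorem stmt_6 {n : ℕ} (S : Set (EuclideanSpace ℝ (Fin n))) (hS : IsClosed S)
    (hstar : ∀ x₀ ∈ S, ∀ x ∈ S, ∃ a : ℝ, a ∈ Set.Ioc (0 : ℝ) 1 ∧
      ∀ l : ℝ, l ∈ Set.Ioo (0 : ℝ) a → x₀ + l • (x - x₀) ∈ S) :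
    Convex ℝ S :=
  hS.convex_of_forall_isLocallyStarShapedAt hstar
end

section
/- If S ⊆ ℝⁿ is locally star-shaped at x̌ ∈ S, then the contingent cone to S at x̌ equals the closure of the cone of weak feasible directions: T(S, x̌) = cl W(S, x̌). -/
open Filter Topology

def weakFeasibleCone {n : ℕ} (S : Set (EuclideanSpace ℝ (Fin n)))
    (x : EuclideanSpace ℝ (Fin n)) : Set (EuclideanSpace ℝ (Fin n)) :=
  {u | ∃ t : ℕ → ℝ, (∀ k, 0 < t k) ∧ Tendsto t atTop (𝓝 0) ∧ ∀ k, x + t k • u ∈ S}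

def contingentCone {n : ℕ} (S : Set (EuclideanSpace ℝ (Fin n)))
    (x : EuclideanSpace ℝ (Fin n)) : Set (EuclideanSpace ℝ (Fin n)) :=
  {u | ∃ t : ℕ → ℝ, ∃ v : ℕ → EuclideanSpace ℝ (Fin n),
    (∀ k, 0 < t k) ∧ Tendsto t atTop (𝓝 0) ∧ Tendsto v atTop (𝓝 u) ∧
    ∀ k, x + t k • v k ∈ S}

/-! A direction `u` is weakly feasible iff `x + s • u ∈ S` for arbitrarily small `s > 0`; this
gives `closure W ⊆ T` by a diagonal choice for any `S`. Conversely, if `x + t • v ∈ S` with `t > 0`,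
local star-shapedness puts `x + s • v` in `S` for all small `s > 0`, so every term of a sequence
witnessing `u ∈ T` already lies in `W`. -/

section Cones

variable {n : ℕ} {S : Set (EuclideanSpace ℝ (Fin n))} {x u : EuclideanSpace ℝ (Fin n)}

theorem mem_weakFeasibleCone_iff_frequently :
    u ∈ weakFeasibleCone S x ↔ ∃ᶠ s in 𝓝[>] (0 : ℝ), x + s • u ∈ S := by
  rw [frequently_nhdsWithin_iff, frequently_iff_seq_forall]
  simp only [weakFeasibleCone, Set.mem_Ioi, forall_and]
  exact exists_congr fun t => by tauto

theorem mem_weakFeasibleCone_of_forall_mem_Ioo {a : ℝ} (ha : 0 < a)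
    (h : ∀ s ∈ Set.Ioo 0 a, x + s • u ∈ S) : u ∈ weakFeasibleCone S x :=
  mem_weakFeasibleCone_iff_frequently.2 <|
    (eventually_of_mem (Ioo_mem_nhdsGT ha) h).frequently

theorem closure_weakFeasibleCone_subset_contingentCone :
    closure (weakFeasibleCone S x) ⊆ contingentCone S x := by
  intro u hu
  obtain ⟨w, hwW, hwu⟩ := mem_closure_iff_seq_limit.mp hu
  have hsmall : ∀ m : ℕ, ∃ s : ℝ, s ∈ Set.Ioo 0 (1 / ((m : ℝ) + 1)) ∧ x + s • w m ∈ S := fun m =>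
    ((mem_weakFeasibleCone_iff_frequently.1 (hwW m)).and_eventually
      (Ioo_mem_nhdsGT (by positivity))).exists.imp fun _ h => h.symm
  choose s hs hsS using hsmall
  exact ⟨s, w, fun m => (hs m).1, squeeze_zero (fun m => (hs m).1.le) (fun m => (hs m).2.le)
    tendsto_one_div_add_atTop_nhds_zero_nat, hwu, hsS⟩

theorem contingentCone_subset_closure_weakFeasibleCone
    (hstar : ∀ y ∈ S, ∃ a : ℝ, 0 < a ∧ ∀ l ∈ Set.Ioo 0 a, x + l • (y - x) ∈ S) :
    contingentCone S x ⊆ closure (weakFeasibleCone S x) := by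
  rintro u ⟨t, v, ht, -, hvu, hvS⟩
  refine mem_closure_of_tendsto hvu (Eventually.of_forall fun k => ?_)
  obtain ⟨a, ha, hseg⟩ := hstar _ (hvS k)
  refine mem_weakFeasibleCone_of_forall_mem_Ioo (mul_pos ha (ht k)) fun s hs => ?_
  have := hseg (s / t k) ⟨div_pos hs.1 (ht k), (div_lt_iff₀ (ht k)).2 hs.2⟩
  rwa [add_sub_cancel_left, smul_smul, div_mul_cancel₀ _ (ht k).ne'] at this

end Cones

theorem stmt_9_general {n : ℕ} (S : Set (EuclideanSpace ℝ (Fin n)))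
    (x₀ : EuclideanSpace ℝ (Fin n))
    (hstar : ∀ x ∈ S, ∃ a : ℝ, a ∈ Set.Ioc (0 : ℝ) 1 ∧
      ∀ l : ℝ, l ∈ Set.Ioo (0 : ℝ) a → x₀ + l • (x - x₀) ∈ S) :
    contingentCone S x₀ = closure (weakFeasibleCone S x₀) :=
  (contingentCone_subset_closure_weakFeasibleCone fun y hy =>
    (hstar y hy).imp fun _ ha => ⟨ha.1.1, ha.2⟩).antisymm
    closure_weakFeasibleCone_subset_contingentCone

theorem stmt_9 {n : ℕ} (S : Set (EuclideanSpace ℝ (Fin n)))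
    (x₀ : EuclideanSpace ℝ (Fin n)) (hx₀ : x₀ ∈ S)
    (hstar : ∀ x ∈ S, ∃ a : ℝ, a ∈ Set.Ioc (0 : ℝ) 1 ∧
      ∀ l : ℝ, l ∈ Set.Ioo (0 : ℝ) a → x₀ + l • (x - x₀) ∈ S) :
    contingentCone S x₀ = closure (weakFeasibleCone S x₀) :=
  stmt_9_general S x₀ hstar
end

section
/- Let S ⊆ ℝⁿ (S ≠ ℝⁿ) be a closed convex cone with nonempty interior, and define Δ_S(x) = −d(x, ℝⁿ \ S) if x ∈ S and Δ_S(x) = d(x, S) otherwise. Then Δ_S is a convex function on ℝⁿ. -/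
open Classical in
noncomputable def signedDist' {n : ℕ} (S : Set (EuclideanSpace ℝ (Fin n)))
    (x : EuclideanSpace ℝ (Fin n)) : ℝ :=
  if x ∈ S then -(Metric.infDist x Sᶜ) else Metric.infDist x S

/-!
The signed distance is the supremum of the affine functions `⟪u, ·⟫ - b` over unit vectors `u`
and half-spaces `{⟪u, ·⟫ ≤ b}` containing `S`, hence convex. Each such function is a minorant:
outside `S` since it is `1`-Lipschitz and `≤ 0` on `S`, inside `S` since it grows at unit rate
in the direction `u`, along which `S` must be left. Outside `S`, the nearest-point projection `p`
of `x` gives one attaining the value `d(x, S)`, with `u` the direction of `x - p`. Inside `S`, the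
same construction at a point `c ∉ S` with `‖x - c‖ < d(x, Sᶜ) + ε` comes within `ε` of
`-d(x, Sᶜ)`.
-/

open Metric Set RealInnerProductSpace

theorem convexOn_univ_of_forall_affine_minorant {E : Type*} [AddCommGroup E] [Module ℝ E]
    {f : E → ℝ} (h : ∀ x, ∀ ε > 0, ∃ g : E →ᵃ[ℝ] ℝ, (∀ y, g y ≤ f y) ∧ f x ≤ g x + ε) :
    ConvexOn ℝ univ f := by
  refine ⟨convex_univ, fun x _ y _ a b ha hb hab => le_of_forall_pos_le_add fun ε hε => ?_⟩
  obtain ⟨g, hgf, hfx⟩ := h (a • x + b • y) ε hε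
  calc f (a • x + b • y) ≤ g (a • x + b • y) + ε := hfx
    _ = a * g x + b * g y + ε := by rw [Convex.combo_affine_apply hab, smul_eq_mul, smul_eq_mul]
    _ ≤ a * f x + b * f y + ε := by gcongr <;> apply hgf

theorem Convex.exists_unit_inner_le_of_notMem {E : Type*} [NormedAddCommGroup E]
    [InnerProductSpace ℝ E] [CompleteSpace E] {S : Set E} (hclosed : IsClosed S)
    (hconv : Convex ℝ S) (hS : S.Nonempty) {c : E} (hc : c ∉ S) :
    ∃ u : E, ∃ b : ℝ, ‖u‖ = 1 ∧ (∀ s ∈ S, ⟪u, s⟫ ≤ b) ∧ ⟪u, c⟫ - b = infDist c S := by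
  obtain ⟨p, hp, hmin⟩ := exists_norm_eq_iInf_of_complete_convex hS hclosed.isComplete hconv c
  have hdist : infDist c S = ‖c - p‖ := by
    rw [infDist_eq_iInf, hmin]
    exact iInf_congr fun w => dist_eq_norm c w
  have hvar := (norm_eq_iInf_iff_real_inner_le_zero hconv hp).mp hmin
  have hcp : c - p ≠ 0 := sub_ne_zero.2 fun h => hc (h ▸ hp)
  refine ⟨‖c - p‖⁻¹ • (c - p), ⟪‖c - p‖⁻¹ • (c - p), p⟫, norm_smul_inv_norm hcp, ?_, ?_⟩
  · intro s hs
    rw [← sub_nonpos, ← inner_sub_right, real_inner_smul_left]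
    exact mul_nonpos_of_nonneg_of_nonpos (by positivity) (hvar s hs)
  · rw [← inner_sub_right, real_inner_smul_left, real_inner_self_eq_norm_sq, hdist]
    field_simp

section SignedDist

variable {n : ℕ} {S : Set (EuclideanSpace ℝ (Fin n))}

theorem inner_sub_le_signedDist' (hS : S.Nonempty) {u : EuclideanSpace ℝ (Fin n)} {b : ℝ}
    (hu : ‖u‖ = 1) (hub : ∀ s ∈ S, ⟪u, s⟫ ≤ b) (x : EuclideanSpace ℝ (Fin n)) :
    ⟪u, x⟫ - b ≤ signedDist' S x := by
  unfold signedDist'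
  split_ifs with hx
  · rw [le_neg, neg_sub]
    refine le_of_forall_pos_le_add fun δ hδ => ?_
    set t := b - ⟪u, x⟫ + δ
    have ht : 0 ≤ t := by linarith [hub x hx]
    have hout : x + t • u ∉ S := fun hmem => by
      have := hub _ hmem
      rw [inner_add_right, real_inner_smul_right, real_inner_self_eq_norm_sq, hu] at this
      linarith
    calc infDist x Sᶜ ≤ dist x (x + t • u) := infDist_le_dist_of_mem hout
      _ = t := by rw [dist_self_add_right, norm_smul, hu, mul_one, Real.norm_of_nonneg ht]
  · refine (le_infDist hS).2 fun s hs => ?_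
    calc ⟪u, x⟫ - b ≤ ⟪u, x - s⟫ := by rw [inner_sub_right]; linarith [hub s hs]
      _ ≤ ‖u‖ * ‖x - s‖ := real_inner_le_norm u (x - s)
      _ = dist x s := by rw [hu, one_mul, dist_eq_norm]

theorem exists_signedDist'_le_inner_sub_add (hclosed : IsClosed S) (hconv : Convex ℝ S)
    (hS : S.Nonempty) (hSc : Sᶜ.Nonempty) (x : EuclideanSpace ℝ (Fin n)) {ε : ℝ} (hε : 0 < ε) :
    ∃ u : EuclideanSpace ℝ (Fin n), ∃ b : ℝ, ‖u‖ = 1 ∧ (∀ s ∈ S, ⟪u, s⟫ ≤ b) ∧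
      signedDist' S x ≤ ⟪u, x⟫ - b + ε := by
  by_cases hx : x ∈ S
  · -- separate a point `c ∉ S` almost nearest to `x` instead of `x` itself
    obtain ⟨c, hc, hxc⟩ := (infDist_lt_iff hSc).mp (lt_add_of_pos_right (infDist x Sᶜ) hε)
    obtain ⟨u, b, hu, hub, hcb⟩ := hconv.exists_unit_inner_le_of_notMem hclosed hS hc
    refine ⟨u, b, hu, hub, ?_⟩
    have hcx : ⟪u, c - x⟫ ≤ dist x c := by
      simpa [hu, dist_comm x c, dist_eq_norm] using real_inner_le_norm u (c - x)
    rw [signedDist', if_pos hx]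
    rw [inner_sub_right] at hcx
    linarith [infDist_nonneg (x := c) (s := S)]
  · obtain ⟨u, b, hu, hub, hxb⟩ := hconv.exists_unit_inner_le_of_notMem hclosed hS hx
    exact ⟨u, b, hu, hub, by rw [signedDist', if_neg hx, hxb]; linarith⟩

theorem convexOn_signedDist' (hclosed : IsClosed S) (hconv : Convex ℝ S) :
    ConvexOn ℝ univ (signedDist' S) := by
  by_cases hdeg : S = ∅ ∨ S = univ
  · -- `infDist x ∅ = 0`, so `signedDist' S` vanishes identically
    have hzero : signedDist' S = fun _ => 0 := by
      funext x
      rcases hdeg with rfl | rfl <;> simp [signedDist']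
    exact hzero ▸ convexOn_const 0 convex_univ
  obtain ⟨hS, hSc⟩ := not_or.mp hdeg
  rw [← Ne, ← nonempty_iff_ne_empty] at hS
  rw [← Ne, ← nonempty_compl] at hSc
  refine convexOn_univ_of_forall_affine_minorant fun x ε hε => ?_
  obtain ⟨u, b, hu, hub, hx⟩ := exists_signedDist'_le_inner_sub_add hclosed hconv hS hSc x hε
  refine ⟨(innerₛₗ ℝ u).toAffineMap - AffineMap.const ℝ _ b, fun y => ?_, ?_⟩
  · simpa using inner_sub_le_signedDist' hS hu hub y
  · simpa using hx

end SignedDist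

theorem stmt_11_general {n : ℕ} (S : Set (EuclideanSpace ℝ (Fin n)))
    (hclosed : IsClosed S) (hconv : Convex ℝ S) :
    ConvexOn ℝ Set.univ (signedDist' S) :=
  convexOn_signedDist' hclosed hconv

theorem stmt_11 {n : ℕ} (S : Set (EuclideanSpace ℝ (Fin n)))
    (hclosed : IsClosed S) (hconv : Convex ℝ S)
    (hcone : ∀ t : ℝ, 0 ≤ t → ∀ x ∈ S, t • x ∈ S)
    (hint : (interior S).Nonempty) (hne : S ≠ Set.univ) :
    ConvexOn ℝ Set.univ (signedDist' S) :=
  stmt_11_general S hclosed hconv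
end

section
/- Let S ⊆ ℝⁿ (S ≠ ℝⁿ) be a closed convex cone with nonempty interior, and Δ_S defined by Δ_S(x) = −d(x, ℝⁿ \ S) for x ∈ S and Δ_S(x) = d(x, S) otherwise. Then Δ_S is decreasing with respect to the order induced by S: if x − y ∈ S then Δ_S(x) ≤ Δ_S(y). -/
/-!
A cone `S` that is convex is closed under addition, so for `s = x - y ∈ S` the translate `s +ᵥ S`
lies in `S` and `-s +ᵥ Sᶜ` lies in `Sᶜ`. Translating by a vector that maps a set into itself can
only decrease the distance to it, which gives `d(x, S) ≤ d(y, S)` when both points lie outside `S`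
and `d(y, Sᶜ) ≤ d(x, Sᶜ)` when both lie inside. If `y ∈ S` then `x = y + s ∈ S`, and the remaining
case `y ∉ S`, `x ∈ S` compares a nonpositive with a nonnegative number.
-/

open Pointwise

open Classical in
noncomputable def stmtSignedDist {n : ℕ} (S : Set (EuclideanSpace ℝ (Fin n)))
    (x : EuclideanSpace ℝ (Fin n)) : ℝ :=
  if x ∈ S then -(Metric.infDist x Sᶜ) else Metric.infDist x S

theorem Metric.infDist_vadd {α M : Type*} [PseudoMetricSpace α] [VAdd M α] [IsIsometricVAdd M α]
    (c : M) (x : α) (s : Set α) : infDist (c +ᵥ x) (c +ᵥ s) = infDist x s := by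
  rw [infDist, infEDist_vadd, ← infDist]

theorem Metric.infDist_vadd_le_of_vadd_subset {α M : Type*} [PseudoMetricSpace α] [VAdd M α]
    [IsIsometricVAdd M α] {c : M} {s : Set α} (hs : s.Nonempty) (hcs : c +ᵥ s ⊆ s) (x : α) :
    infDist (c +ᵥ x) s ≤ infDist x s :=
  calc infDist (c +ᵥ x) s ≤ infDist (c +ᵥ x) (c +ᵥ s) := infDist_le_infDist_of_subset hcs hs.vadd_set
    _ = infDist x s := infDist_vadd c x s

section ConvexCone

variable {𝕜 E : Type*} [Field 𝕜] [LinearOrder 𝕜] [IsStrictOrderedRing 𝕜] [AddCommGroup E]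
  [Module 𝕜 E] {S : Set E}

theorem Convex.add_mem_of_smul_mem (hconv : Convex 𝕜 S) (hcone : ∀ t : 𝕜, 0 ≤ t → ∀ x ∈ S, t • x ∈ S)
    {a b : E} (ha : a ∈ S) (hb : b ∈ S) : a + b ∈ S := by
  have hmid : (2 : 𝕜) • ((1 / 2 : 𝕜) • a + (1 / 2 : 𝕜) • b) ∈ S :=
    hcone 2 zero_le_two _ (hconv ha hb (by positivity) (by positivity) (add_halves 1))
  rwa [smul_add, smul_smul, smul_smul, mul_one_div_cancel two_ne_zero, one_smul, one_smul] at hmid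

theorem Convex.vadd_subset_of_smul_mem (hconv : Convex 𝕜 S)
    (hcone : ∀ t : 𝕜, 0 ≤ t → ∀ x ∈ S, t • x ∈ S) {s : E} (hs : s ∈ S) : s +ᵥ S ⊆ S := by
  rintro _ ⟨a, ha, rfl⟩
  exact hconv.add_mem_of_smul_mem hcone hs ha

theorem Convex.neg_vadd_compl_subset_of_smul_mem (hconv : Convex 𝕜 S)
    (hcone : ∀ t : 𝕜, 0 ≤ t → ∀ x ∈ S, t • x ∈ S) {s : E} (hs : s ∈ S) : -s +ᵥ Sᶜ ⊆ Sᶜ := by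
  rintro _ ⟨c, hc, rfl⟩ hmem
  exact hc (by simpa using hconv.add_mem_of_smul_mem hcone hs hmem)

end ConvexCone

theorem stmt_14_general {n : ℕ} (S : Set (EuclideanSpace ℝ (Fin n)))
    (hconv : Convex ℝ S)
    (hcone : ∀ t : ℝ, 0 ≤ t → ∀ x ∈ S, t • x ∈ S)
    (hne : S ≠ Set.univ) :
    ∀ x y : EuclideanSpace ℝ (Fin n), x - y ∈ S → stmtSignedDist S x ≤ stmtSignedDist S y := by
  intro x y hs
  have hx_eq : x = (x - y) +ᵥ y := (sub_add_cancel x y).symm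
  have hy_eq : y = -(x - y) +ᵥ x := by rw [vadd_eq_add, neg_sub, sub_add_cancel]
  by_cases hy : y ∈ S
  · have hx : x ∈ S := hx_eq ▸ hconv.add_mem_of_smul_mem hcone hs hy
    simp only [stmtSignedDist, if_pos hx, if_pos hy, neg_le_neg_iff]
    rw [hy_eq]
    exact Metric.infDist_vadd_le_of_vadd_subset (Set.nonempty_compl.2 hne)
      (hconv.neg_vadd_compl_subset_of_smul_mem hcone hs) x
  by_cases hx : x ∈ S
  · simp only [stmtSignedDist, if_pos hx, if_neg hy]
    exact (neg_nonpos.2 Metric.infDist_nonneg).trans Metric.infDist_nonneg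
  · simp only [stmtSignedDist, if_neg hx, if_neg hy]
    rw [hx_eq]
    exact Metric.infDist_vadd_le_of_vadd_subset ⟨_, hs⟩ (hconv.vadd_subset_of_smul_mem hcone hs) y

theorem stmt_14 {n : ℕ} (S : Set (EuclideanSpace ℝ (Fin n)))
    (hclosed : IsClosed S) (hconv : Convex ℝ S)
    (hcone : ∀ t : ℝ, 0 ≤ t → ∀ x ∈ S, t • x ∈ S)
    (hint : (interior S).Nonempty) (hne : S ≠ Set.univ) :
    ∀ x y : EuclideanSpace ℝ (Fin n), x - y ∈ S → stmtSignedDist S x ≤ stmtSignedDist S y :=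
  stmt_14_general S hconv hcone hne
end
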